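/- Let K ⊆ ℝ^m be a nonempty closed convex set and let F : ℝ^n → ℝ^m be a map each of whose components has an L-Lipschitz continuous gradient. Define φ(x) = dist_∞(F(x), K) (the ℓ∞ distance from F(x) to K). Suppose at a point x and direction d there exists a point y ∈ K with ‖F(x) + ∇F(x)ᵀd − y‖_∞ = κ, and set Δ = φ(x) − κ. Then for all α ∈ [0,1], φ(x + αd) ≤ φ(x) − αΔ + (L/2)α²‖d‖². -/

import Mathlib

/-!
Linearize each component of `F` at `x`: by the Lipschitz bound on the gradient, the linear
model `F x + α • F'(x) d` is within `(L/2) α² ‖d‖²` of `F (x + α • d)` in every coordinate.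
Since `K` is convex, `u ↦ dist_∞(u, K)` is convex, so at the model point it is at most
`(1 - α) φ(x) + α κ`, the value `κ` being witnessed by `y`. Finally `dist_∞(·, K)` is
1-Lipschitz.
-/

open Metric Set
open scoped NNReal

theorem Convex.convexOn_infDist {E : Type*} [SeminormedAddCommGroup E] [NormedSpace ℝ E]
    {K : Set E} (hK : Convex ℝ K) : ConvexOn ℝ univ (infDist · K) := by
  refine ⟨convex_univ, fun u _ w _ a b ha hb hab => ?_⟩
  rcases K.eq_empty_or_nonempty with rfl | hKne
  · simp
  refine le_of_forall_pos_le_add fun ε hε => ?_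
  obtain ⟨p, hp, hup⟩ := (infDist_lt_iff hKne).1 (lt_add_of_pos_right (infDist u K) hε)
  obtain ⟨q, hq, hwq⟩ := (infDist_lt_iff hKne).1 (lt_add_of_pos_right (infDist w K) hε)
  calc infDist (a • u + b • w) K
      ≤ dist (a • u + b • w) (a • p + b • q) := infDist_le_dist_of_mem (hK hp hq ha hb hab)
    _ ≤ a * dist u p + b * dist w q := by
        refine (dist_add_add_le _ _ _ _).trans_eq ?_
        rw [dist_smul₀, dist_smul₀, Real.norm_of_nonneg ha, Real.norm_of_nonneg hb]
    _ ≤ a * (infDist u K + ε) + b * (infDist w K + ε) := by gcongr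
    _ = a * infDist u K + b * infDist w K + ε := by linear_combination ε * hab

section Taylor

variable {E F : Type*} [NormedAddCommGroup E] [NormedSpace ℝ E]
  [NormedAddCommGroup F] [NormedSpace ℝ F]

theorem add_smul_mem_segment_add {x v : E} {t : ℝ} (ht : t ∈ Icc 0 1) :
    x + t • v ∈ segment ℝ x (x + v) := by
  rw [segment_eq_image']
  exact ⟨t, ht, by simp⟩

theorem norm_sub_sub_fderiv_le_of_lipschitzOnWith {f : E → F} {x v : E} {L : ℝ≥0}
    (hf : ∀ z ∈ segment ℝ x (x + v), DifferentiableAt ℝ f z)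
    (hlip : LipschitzOnWith L (fderiv ℝ f) (segment ℝ x (x + v))) :
    ‖f (x + v) - f x - fderiv ℝ f x v‖ ≤ L / 2 * ‖v‖ ^ 2 := by
  set f' := fderiv ℝ f
  let φ : ℝ → F := fun t => f (x + t • v) - f x - t • f' x v
  have hφ : ∀ t ∈ Icc (0 : ℝ) 1, HasDerivAt φ (f' (x + t • v) v - f' x v) t := by
    intro t ht
    have hline : HasDerivAt (fun t : ℝ => x + t • v) v t := by
      simpa using ((hasDerivAt_id t).smul_const v).const_add x
    exact (((hf _ (add_smul_mem_segment_add ht)).hasFDerivAt.comp_hasDerivAt t hline).sub_const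
      (f x)).sub (by simpa using (hasDerivAt_id t).smul_const (f' x v))
  have hφ'_le : ∀ s ∈ Icc (0 : ℝ) 1, ‖f' (x + s • v) v - f' x v‖ ≤ L * ‖v‖ ^ 2 * s := by
    intro s hs
    have hdist : dist (x + s • v) x = s * ‖v‖ := by
      rw [dist_eq_norm, add_sub_cancel_left, norm_smul, Real.norm_of_nonneg hs.1]
    calc ‖f' (x + s • v) v - f' x v‖ = ‖(f' (x + s • v) - f' x) v‖ := rfl
      _ ≤ ‖f' (x + s • v) - f' x‖ * ‖v‖ := (f' (x + s • v) - f' x).le_opNorm v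
      _ ≤ L * (s * ‖v‖) * ‖v‖ := by
          gcongr
          rw [← dist_eq_norm, ← hdist]
          exact hlip.dist_le_mul _ (add_smul_mem_segment_add hs) _ (left_mem_segment ℝ _ _)
      _ = L * ‖v‖ ^ 2 * s := by ring
  have hbound := image_norm_le_of_norm_deriv_right_le_deriv_boundary
    (f := φ) (B := fun t => L * ‖v‖ ^ 2 / 2 * t ^ 2) (B' := fun t => L * ‖v‖ ^ 2 * t)
    (fun s hs => (hφ s hs).continuousAt.continuousWithinAt)
    (fun s hs => (hφ s (Ico_subset_Icc_self hs)).hasDerivWithinAt) (by simp [φ])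
    (fun s => ((hasDerivAt_pow 2 s).const_mul (L * ‖v‖ ^ 2 / 2)).congr_deriv (by simp; ring))
    (fun s hs => hφ'_le s (Ico_subset_Icc_self hs)) (right_mem_Icc.2 zero_le_one)
  simpa [φ, div_mul_eq_mul_div, mul_right_comm] using hbound

end Taylor

theorem stmt_0_general (n m : ℕ) (K : Set (Fin m → ℝ))
    (hKconv : Convex ℝ K)
    (F : EuclideanSpace ℝ (Fin n) → Fin m → ℝ) (L : ℝ) (hL : 0 ≤ L)
    (x d : EuclideanSpace ℝ (Fin n))
    (hdiff : ∀ i, Differentiable ℝ (fun z => F z i))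
    (hlip : ∀ i, LipschitzOnWith (Real.toNNReal L)
      (fun z => fderiv ℝ (fun w => F w i) z) (segment ℝ x (x + d)))
    (κ Δ : ℝ) (y : Fin m → ℝ) (hy : y ∈ K)
    (hκ : ‖(fun i => F x i + fderiv ℝ (fun w => F w i) x d) - y‖ = κ)
    (hΔ : Δ = infDist (F x) K - κ) :
    ∀ α ∈ Set.Icc (0:ℝ) 1,
      infDist (F (x + α • d)) K ≤ infDist (F x) K - α * Δ + L / 2 * α ^ 2 * ‖d‖ ^ 2 := by
  intro α hα
  set u := F x
  set v : Fin m → ℝ := fun i => fderiv ℝ (fun w => F w i) x d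
  have hsub : segment ℝ x (x + α • d) ⊆ segment ℝ x (x + d) :=
    (convex_segment _ _).segment_subset (left_mem_segment ℝ _ _) (add_smul_mem_segment_add hα)
  have hremainder : ‖F (x + α • d) - (u + α • v)‖ ≤ L / 2 * α ^ 2 * ‖d‖ ^ 2 := by
    refine (pi_norm_le_iff_of_nonneg (by positivity)).2 fun i => ?_
    have h := norm_sub_sub_fderiv_le_of_lipschitzOnWith
      (fun z _ => (hdiff i).differentiableAt) ((hlip i).mono hsub)
    rw [Real.coe_toNNReal L hL, norm_smul, Real.norm_of_nonneg hα.1, map_smul] at h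
    convert h using 1
    · simp [u, v, sub_sub]
    · ring
  have hwitness : infDist (u + v) K ≤ κ :=
    calc infDist (u + v) K ≤ dist (u + v) y := infDist_le_dist_of_mem hy
      _ = κ := by rw [dist_eq_norm, ← hκ]; rfl
  have hmodel : infDist (u + α • v) K ≤ (1 - α) * infDist u K + α * κ :=
    calc infDist (u + α • v) K = infDist ((1 - α) • u + α • (u + v)) K := by congr 1; module
      _ ≤ (1 - α) * infDist u K + α * infDist (u + v) K :=
        hKconv.convexOn_infDist.2 (mem_univ u) (mem_univ (u + v)) (sub_nonneg.2 hα.2) hα.1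
          (sub_add_cancel 1 α)
      _ ≤ (1 - α) * infDist u K + α * κ := by gcongr; exact hα.1
  have hlipschitz := infDist_le_infDist_add_dist (s := K) (x := F (x + α • d)) (y := u + α • v)
  rw [dist_eq_norm] at hlipschitz
  rw [hΔ]
  linarith

/-- Infeasibility-decrease estimate: if each component of `F` has an
`L`-Lipschitz derivative on the segment `[x, x+d]`, `K` is a nonempty closed
convex set, `φ(x) = dist_∞(F(x), K)` (the Pi/sup metric on `Fin m → ℝ`),
and `y ∈ K` achieves `‖F(x) + F'(x)d − y‖_∞ = κ`, then with
`Δ = φ(x) − κ` we have `φ(x + αd) ≤ φ(x) − αΔ + (L/2)α²‖d‖²` for `α ∈ [0,1]`. -/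
theorem stmt_0 (n m : ℕ) (K : Set (Fin m → ℝ)) (hKne : K.Nonempty)
    (hKcl : IsClosed K) (hKconv : Convex ℝ K)
    (F : EuclideanSpace ℝ (Fin n) → Fin m → ℝ) (L : ℝ) (hL : 0 ≤ L)
    (x d : EuclideanSpace ℝ (Fin n))
    (hdiff : ∀ i, Differentiable ℝ (fun z => F z i))
    (hlip : ∀ i, LipschitzOnWith (Real.toNNReal L)
      (fun z => fderiv ℝ (fun w => F w i) z) (segment ℝ x (x + d)))
    (κ Δ : ℝ) (y : Fin m → ℝ) (hy : y ∈ K)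
    (hκ : ‖(fun i => F x i + fderiv ℝ (fun w => F w i) x d) - y‖ = κ)
    (hΔ : Δ = infDist (F x) K - κ) :
    ∀ α ∈ Set.Icc (0:ℝ) 1,
      infDist (F (x + α • d)) K ≤ infDist (F x) K - α * Δ + L / 2 * α ^ 2 * ‖d‖ ^ 2 :=
  stmt_0_general n m K hKconv F L hL x d hdiff hlip κ Δ y hy hκ hΔ
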